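/- arXiv:2211.06267 — 4 statements merged into one kernel-verified Lean document; each statement's English description precedes it below -/
import Mathlib

section
/- Region growing lemma (expectation form): for any vertex set S and 0≤a<b, if the radius t is chosen uniformly at random in (a,b), then E[C(S,t)/Vol(S,t)] ≤ (1/(b−a))·ln(Vol(S,b)/Vol(S,a)). -/
open MeasureTheory

/-- Region growing lemma (expectation form). If `Vol` is positive and
nondecreasing on `[a,b]` and `C` is its derivative a.e. on `(a,b)`, then the expectation
of `C(t)/Vol(t)` for `t` uniform in `(a,b)` is at most `(1/(b-a))·ln(Vol(b)/Vol(a))`. -/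
theorem region_growing_expectation (a b : ℝ) (h0 : 0 ≤ a) (hab : a < b)
    (Vol C : ℝ → ℝ)
    (hpos : ∀ t ∈ Set.Icc a b, 0 < Vol t)
    (hmono : MonotoneOn Vol (Set.Icc a b))
    (hderiv : ∀ᵐ t ∂(volume.restrict (Set.Ioo a b)), HasDerivAt Vol (C t) t) :
    (b - a)⁻¹ * ∫ t in Set.Ioo a b, C t / Vol t
      ≤ (b - a)⁻¹ * Real.log (Vol b / Vol a) := by
  have hainv : (0:ℝ) ≤ (b - a)⁻¹ := inv_nonneg.mpr (by linarith)
  -- clamp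
  set cl : ℝ → ℝ := fun t => max a (min t b) with hcl
  have hclmem : ∀ t, cl t ∈ Set.Icc a b :=
    fun t => ⟨le_max_left _ _, max_le hab.le (min_le_right _ _)⟩
  have hclmono : Monotone cl := fun s t hst => max_le_max le_rfl (min_le_min hst le_rfl)
  have hclid : ∀ t ∈ Set.Ioo a b, cl t = t := by
    intro t ht
    simp [hcl, min_eq_left ht.2.le, max_eq_right ht.1.le]
  set g : ℝ → ℝ := fun t => Real.log (Vol (cl t)) with hg
  have hgmono : Monotone g := by
    intro s t hst
    exact Real.log_le_log (hpos _ (hclmem s)) (hmono (hclmem s) (hclmem t) (hclmono hst))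
  have hga : g a = Real.log (Vol a) := by
    simp [hg, hcl, min_eq_left hab.le, max_eq_right (le_refl a)]
  have hgb : g b = Real.log (Vol b) := by
    simp [hg, hcl, min_eq_left (le_refl b), max_eq_right hab.le]
  -- derivative of g on Ioo
  have hgderiv : ∀ᵐ t ∂(volume.restrict (Set.Ioo a b)),
      HasDerivAt g (C t / Vol t) t := by
    filter_upwards [hderiv, ae_restrict_mem measurableSet_Ioo] with t hd ht
    have h1 : HasDerivAt (fun s => Real.log (Vol s)) (C t / Vol t) t :=
      hd.log (ne_of_gt (hpos t (Set.Ioo_subset_Icc_self ht)))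
    apply h1.congr_of_eventuallyEq
    filter_upwards [isOpen_Ioo.mem_nhds ht] with s hs
    rw [hg]; simp only [hclid s hs]
  -- stieltjes
  set f := hgmono.stieltjesFunction with hf
  have hae : ∀ᵐ t ∂(volume.restrict (Set.Ioo a b)),
      C t / Vol t = (Measure.rnDeriv f.measure volume t).toReal := by
    filter_upwards [hgderiv, ae_restrict_of_ae hgmono.ae_hasDerivAt] with t h1 h2
    exact h1.unique h2
  rw [integral_congr_ae hae]
  have hfin : ∀ᵐ t ∂(volume.restrict (Set.Ioo a b)),
      Measure.rnDeriv f.measure volume t < ⊤ :=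
    ae_restrict_of_ae (Measure.rnDeriv_lt_top _ _)
  rw [integral_toReal (Measure.measurable_rnDeriv _ _).aemeasurable hfin]
  gcongr
  have hle : ∫⁻ t in Set.Ioo a b, Measure.rnDeriv f.measure volume t ∂volume
      ≤ f.measure (Set.Ioo a b) := Measure.setLIntegral_rnDeriv_le _
  have hμ : f.measure (Set.Ioo a b) ≤ ENNReal.ofReal (Real.log (Vol b / Vol a)) := by
    rw [f.measure_Ioo]
    apply ENNReal.ofReal_le_ofReal
    have hcb : g (b + 1) = g b := by
      simp [hg, hcl, min_eq_right (by linarith : b ≤ b + 1), min_eq_left (le_refl b)]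
    have h1 : Function.leftLim f b ≤ g b := by
      calc Function.leftLim f b ≤ f b := f.mono.leftLim_le le_rfl
        _ = Function.rightLim g b := hgmono.stieltjesFunction_eq b
        _ ≤ g (b + 1) := hgmono.rightLim_le (by linarith)
        _ = g b := hcb
    have h2 : g a ≤ f a := by
      rw [hf, hgmono.stieltjesFunction_eq a]
      exact hgmono.le_rightLim le_rfl
    rw [Real.log_div (ne_of_gt (hpos b ⟨hab.le, le_rfl⟩)) (ne_of_gt (hpos a ⟨le_rfl, hab.le⟩))]
    rw [← hga, ← hgb]
    linarith
  calc (∫⁻ t in Set.Ioo a b, Measure.rnDeriv f.measure volume t ∂volume).toReal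
      ≤ (ENNReal.ofReal (Real.log (Vol b / Vol a))).toReal := by
        apply ENNReal.toReal_mono ENNReal.ofReal_ne_top (hle.trans hμ)
    _ ≤ Real.log (Vol b / Vol a) := by
        rw [ENNReal.toReal_ofReal']
        exact max_le le_rfl (by
          rw [Real.log_div (ne_of_gt (hpos b ⟨hab.le, le_rfl⟩)) (ne_of_gt (hpos a ⟨le_rfl, hab.le⟩)), ← hga, ← hgb]
          linarith [hgmono hab.le])
end

section
/- Region growing lemma (existential form): for any vertex set S and 0≤a<b, there exists a radius t₀∈[a,b) such that C(S,t₀) ≤ (1/(b−a))·ln(Vol(S,b)/Vol(S,a))·Vol(S,t₀). Moreover t₀ can be chosen from a set of at most |V| candidate radii. -/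
/-!
Put `K = ln (Vol b / Vol a) / (b - a)`. Integrating the logarithmic derivative `C / Vol` of the
monotone function `Vol` gives `∫ₐᵇ C / Vol ≤ ln (Vol b / Vol a) = K (b - a)`, so `C t / Vol t ≤ K`
for some `t ∈ (a, b)`; the candidate dominating `t` (smaller cut, larger volume) inherits
`C ≤ K · Vol`, because `K ≥ 0`. For a merely monotone `Vol` the fundamental theorem of calculus
holds only as an inequality, which is the direction needed here.
-/

open MeasureTheory Set Filter Topology

/-- `f'` agrees a.e. with the density of the Stieltjes measure of `f`, whose integral is at most
the mass `f (b⁻) - f (a⁺) ≤ f b - f a` of `(a, b)`: the jumps and the singular part are lost. -/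
theorem Monotone.setIntegral_Ioo_deriv_le {f f' : ℝ → ℝ} (hf : Monotone f) {a b : ℝ}
    (hab : a ≤ b) (hderiv : ∀ᵐ t ∂volume.restrict (Ioo a b), HasDerivAt f (f' t) t) :
    ∫ t in Ioo a b, f' t ≤ f b - f a := by
  set μ := hf.stieltjesFunction.measure
  have hf'_eq : f' =ᵐ[volume.restrict (Ioo a b)] fun t => (μ.rnDeriv volume t).toReal := by
    filter_upwards [hderiv, ae_restrict_of_ae hf.ae_hasDerivAt] with t h₁ h₂
    exact h₁.unique h₂
  have hμ : μ.real (Ioo a b) ≤ f b - f a := by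
    rw [measureReal_def, StieltjesFunction.measure_Ioo, ENNReal.toReal_ofReal']
    have hleft : Function.leftLim hf.stieltjesFunction b ≤ f b := by
      rw [show (hf.stieltjesFunction : ℝ → ℝ) = Function.rightLim f from rfl,
        leftLim_rightLim (hf.tendsto_leftLim b)]
      exact hf.leftLim_le le_rfl
    have hright : f a ≤ hf.stieltjesFunction a := hf.le_rightLim le_rfl
    exact max_le (by linarith) (sub_nonneg.2 (hf hab))
  calc ∫ t in Ioo a b, f' t = ∫ t in Ioo a b, (μ.rnDeriv volume t).toReal :=
        integral_congr_ae hf'_eq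
    _ ≤ μ.real (Ioo a b) := Measure.setIntegral_toReal_rnDeriv_le measure_Ioo_lt_top.ne
    _ ≤ f b - f a := hμ

theorem MonotoneOn.setIntegral_Ioo_deriv_le {f f' : ℝ → ℝ} {a b : ℝ} (hab : a ≤ b)
    (hf : MonotoneOn f (Icc a b))
    (hderiv : ∀ᵐ t ∂volume.restrict (Ioo a b), HasDerivAt f (f' t) t) :
    ∫ t in Ioo a b, f' t ≤ f b - f a := by
  have ha : a ∈ Icc a b := left_mem_Icc.2 hab
  have hb : b ∈ Icc a b := right_mem_Icc.2 hab
  obtain ⟨g, hg, hfg⟩ := hf.exists_monotone_extension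
    ⟨f a, by rintro _ ⟨x, hx, rfl⟩; exact hf ha hx hx.1⟩
    ⟨f b, by rintro _ ⟨x, hx, rfl⟩; exact hf hx hb hx.2⟩
  have hgderiv : ∀ᵐ t ∂volume.restrict (Ioo a b), HasDerivAt g (f' t) t := by
    filter_upwards [hderiv, ae_restrict_mem measurableSet_Ioo] with t ht htIoo
    exact ht.congr_of_eventuallyEq
      (eventuallyEq_of_mem (Icc_mem_nhds htIoo.1 htIoo.2) hfg.symm)
  rw [hfg ha, hfg hb]
  exact hg.setIntegral_Ioo_deriv_le hab hgderiv

theorem exists_mem_Ioo_le_of_setIntegral_le {f : ℝ → ℝ} {a b K : ℝ} (hab : a < b)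
    (hf : IntegrableOn f (Ioo a b)) (hint : ∫ t in Ioo a b, f t ≤ (b - a) * K) :
    ∃ t ∈ Ioo a b, f t ≤ K := by
  by_contra! hlt
  have hfi : IntervalIntegrable f volume a b :=
    (intervalIntegrable_iff_integrableOn_Ioo_of_le hab.le).2 hf
  have hpos : 0 < ∫ t in a..b, (f t - K) :=
    intervalIntegral.intervalIntegral_pos_of_pos_on (hfi.sub intervalIntegrable_const)
      (fun t ht => sub_pos.2 (hlt t ht)) hab
  rw [intervalIntegral.integral_sub hfi intervalIntegrable_const,
    intervalIntegral.integral_of_le hab.le, integral_Ioc_eq_integral_Ioo,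
    intervalIntegral.integral_const, smul_eq_mul] at hpos
  linarith

theorem setIntegral_deriv_div_le_log_div {Vol C : ℝ → ℝ} {a b : ℝ} (hab : a ≤ b)
    (hpos : ∀ t ∈ Icc a b, 0 < Vol t) (hmono : MonotoneOn Vol (Icc a b))
    (hderiv : ∀ᵐ t ∂volume.restrict (Ioo a b), HasDerivAt Vol (C t) t) :
    ∫ t in Ioo a b, C t / Vol t ≤ Real.log (Vol b / Vol a) := by
  have hlogmono : MonotoneOn (fun t => Real.log (Vol t)) (Icc a b) :=
    fun s hs t ht hst => Real.log_le_log (hpos s hs) (hmono hs ht hst)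
  have hlogderiv : ∀ᵐ t ∂volume.restrict (Ioo a b),
      HasDerivAt (fun u => Real.log (Vol u)) (C t / Vol t) t := by
    filter_upwards [hderiv, ae_restrict_mem measurableSet_Ioo] with t ht htIoo
    exact ht.log (hpos t (Ioo_subset_Icc_self htIoo)).ne'
  rw [Real.log_div (hpos b (right_mem_Icc.2 hab)).ne' (hpos a (left_mem_Icc.2 hab)).ne']
  exact hlogmono.setIntegral_Ioo_deriv_le hab hlogderiv

theorem region_growing_exists_general
    (a b : ℝ) (hab : a < b) (Vol C : ℝ → ℝ)
    (hpos : ∀ t ∈ Set.Icc a b, 0 < Vol t)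
    (hmono : MonotoneOn Vol (Set.Icc a b))
    (hderiv : ∀ᵐ t ∂(volume.restrict (Set.Ioo a b)), HasDerivAt Vol (C t) t)
    (hint : IntegrableOn (fun t => C t / Vol t) (Set.Ioo a b))
    (T : Finset ℝ)
    (hTrep : ∀ t ∈ Set.Ico a b, ∃ t' ∈ T, t' ∈ Set.Ico a b ∧ C t' ≤ C t ∧ Vol t ≤ Vol t') :
    ∃ t₀ ∈ T, t₀ ∈ Set.Ico a b ∧
      C t₀ ≤ (b - a)⁻¹ * Real.log (Vol b / Vol a) * Vol t₀ := by
  set K := (b - a)⁻¹ * Real.log (Vol b / Vol a)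
  have hK : 0 ≤ K := by
    have hVa := hpos a (left_mem_Icc.2 hab.le)
    have hVab := hmono (left_mem_Icc.2 hab.le) (right_mem_Icc.2 hab.le) hab.le
    exact mul_nonneg (inv_nonneg.2 (sub_nonneg.2 hab.le))
      (Real.log_nonneg ((one_le_div hVa).2 hVab))
  obtain ⟨t, ht, hCt⟩ : ∃ t ∈ Ioo a b, C t / Vol t ≤ K := by
    refine exists_mem_Ioo_le_of_setIntegral_le hab hint ?_
    rw [mul_inv_cancel_left₀ (sub_ne_zero.2 hab.ne')]
    exact setIntegral_deriv_div_le_log_div hab.le hpos hmono hderiv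
  obtain ⟨t₀, ht₀T, ht₀, hC, hV⟩ := hTrep t (Ioo_subset_Ico_self ht)
  refine ⟨t₀, ht₀T, ht₀, ?_⟩
  calc C t₀ ≤ C t := hC
    _ ≤ K * Vol t := (div_le_iff₀ (hpos t (Ioo_subset_Icc_self ht))).1 hCt
    _ ≤ K * Vol t₀ := mul_le_mul_of_nonneg_left hV hK

/-- Region growing lemma (existential form). In the region growing setting
(`Vol` positive, nondecreasing, with derivative `C` a.e., `C/Vol` integrable), given a set
`T` of at most `|V|` candidate radii such that every radius in `[a,b)` is dominated by a
candidate (smaller cut capacity, larger volume), there exists a radius `t₀ ∈ T ∩ [a,b)`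
with `C(t₀) ≤ (1/(b-a))·ln(Vol(b)/Vol(a))·Vol(t₀)`. -/
theorem region_growing_exists {V : Type*} [Fintype V]
    (a b : ℝ) (h0 : 0 ≤ a) (hab : a < b) (Vol C : ℝ → ℝ)
    (hpos : ∀ t ∈ Set.Icc a b, 0 < Vol t)
    (hmono : MonotoneOn Vol (Set.Icc a b))
    (hderiv : ∀ᵐ t ∂(volume.restrict (Set.Ioo a b)), HasDerivAt Vol (C t) t)
    (hint : IntegrableOn (fun t => C t / Vol t) (Set.Ioo a b))
    (T : Finset ℝ) (hTcard : T.card ≤ Fintype.card V)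
    (hTrep : ∀ t ∈ Set.Ico a b, ∃ t' ∈ T, t' ∈ Set.Ico a b ∧ C t' ≤ C t ∧ Vol t ≤ Vol t') :
    ∃ t₀ ∈ T, t₀ ∈ Set.Ico a b ∧
      C t₀ ≤ (b - a)⁻¹ * Real.log (Vol b / Vol a) * Vol t₀ :=
  region_growing_exists_general a b hab Vol C hpos hmono hderiv hint T hTrep
end

section
/- Covering decomposition lemma: Let G=(V,E) have edge capacities c and edge lengths l with induced distance d, F = Σ_e c(e)·l(e), and suppose S⊆V with |S|≤r satisfies d(u,S)≤1/4 for all u∈V. Then there exists a set E'⊆E with c(E') ≤ 8·ln(r+1)·F such that every connected component of (V, E∖E') has d-diameter strictly less than 1. -/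
open scoped ENNReal

/-- Length of a walk with respect to edge lengths `l`. -/
noncomputable def walkLen {V : Type*} {G : SimpleGraph V} (l : Sym2 V → NNReal)
    {u v : V} (p : G.Walk u v) : ℝ≥0∞ :=
  (p.edges.map fun e => (l e : ℝ≥0∞)).sum

/-- Shortest-path distance in `G` with edge lengths `l` (`∞` if disconnected). -/
noncomputable def wdist {V : Type*} (G : SimpleGraph V) (l : Sym2 V → NNReal)
    (u v : V) : ℝ≥0∞ :=
  ⨅ p : G.Walk u v, walkLen l p

open Set Filter Topology Real Finset

/-!
Region growing. Treat the centres one at a time: around the current centre `s`, carve the ball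
`{u ∈ W | d(s, u) ≤ ρ}` out of the set `W` of vertices not yet clustered and cut the edges
leaving it. Its radius `ρ ∈ [1/4, 1/2)` is chosen so that the capacity of the cut is at most `k`
times the volume `V₀ + ∑ₑ c(e) · (length of e inside the ball)`. Such a radius exists because the
cut capacity is at most the right derivative of the volume in `ρ`: otherwise the volume would
grow by more than the factor `exp (k / 4)` between `1/4` and `1/2`, whereas it only grows from
`V₀` to at most `V₀ + F ≤ exp (k / 4) V₀`. The volume charged to a ball is removed together
with the ball, so over at most `r` centres the cuts cost at most `k (r V₀ + F)`, which is
`8 log (r + 1) F` for `k = 4 log (r + 1)` and `V₀ = F / r`. The balls have radius `< 1/2`, hence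
diameter `< 1`, and cover `V` since every vertex is within `1/4` of a centre.
-/
theorem strictMonoOn_of_hasDerivWithinAt_Ici_pos {f f' : ℝ → ℝ} {a b : ℝ}
    (hf : ContinuousOn f (Icc a b)) (hf' : ∀ x ∈ Ico a b, HasDerivWithinAt f (f' x) (Ici x) x)
    (hpos : ∀ x ∈ Ico a b, 0 < f' x) : StrictMonoOn f (Icc a b) := by
  intro x hx y hy hxy
  have hx' : x ∈ Ico a b := ⟨hx.1, hxy.trans_le hy.2⟩
  obtain ⟨z, hzy, hxz⟩ : ∃ z ∈ Ioo x y, f x < f z := by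
    have hslope := (hasDerivWithinAt_iff_tendsto_slope' (lt_irrefl x)).1 (hf' x hx').Ioi_of_Ici
    obtain ⟨z, hz, hpos⟩ :=
      (Filter.Eventually.and (Ioo_mem_nhdsGT hxy) (hslope (Ioi_mem_nhds (hpos x hx')))).exists
    exact ⟨z, hz, by simpa [slope_def_field, sub_pos, div_pos_iff, hz.1] using hpos⟩
  have hzy' : Icc z y ⊆ Icc a b := Icc_subset_Icc (hx.1.trans hzy.1.le) hy.2
  have := image_le_of_deriv_right_le_deriv_boundary (f := fun _ => f z) (f' := fun _ => 0)
    continuousOn_const (fun _ _ => hasDerivWithinAt_const _ _ _) le_rfl (hf.mono hzy')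
    (fun w hw => hf' w ⟨(hzy' (Ico_subset_Icc_self hw)).1, hw.2.trans_le hy.2⟩)
    (fun w hw => (hpos w ⟨(hzy' (Ico_subset_Icc_self hw)).1, hw.2.trans_le hy.2⟩).le)
    (right_mem_Icc.2 hzy.2.le)
  exact hxz.trans_le this

theorem exp_mul_lt_of_hasDerivWithinAt_Ici {f f' : ℝ → ℝ} {a b k : ℝ} (hab : a < b)
    (hf : ContinuousOn f (Icc a b)) (hf' : ∀ x ∈ Ico a b, HasDerivWithinAt f (f' x) (Ici x) x)
    (hgrowth : ∀ x ∈ Ico a b, k * f x < f' x) : exp (k * (b - a)) * f a < f b := by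
  have hmono := strictMonoOn_of_hasDerivWithinAt_Ici_pos (f := fun x => exp (-(k * x)) * f x)
    (f' := fun x => exp (-(k * x)) * (f' x - k * f x))
    ((continuous_exp.comp (continuous_const.mul continuous_id).neg).continuousOn.mul hf)
    (fun x hx => by
      have he : HasDerivAt (fun y => exp (-(k * y))) (exp (-(k * x)) * -k) x := by
        simpa using ((hasDerivAt_id' x).const_mul k).neg.exp
      exact (he.hasDerivWithinAt.fun_mul (hf' x hx)).congr_deriv (by ring))
    (fun x hx => mul_pos (exp_pos _) (sub_pos.2 (hgrowth x hx)))
    (left_mem_Icc.2 hab.le) (right_mem_Icc.2 hab.le) hab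
  have hb : f b = exp (k * b) * (exp (-(k * b)) * f b) := by
    rw [← mul_assoc, ← exp_add]; simp
  have ha : exp (k * (b - a)) * f a = exp (k * b) * (exp (-(k * a)) * f a) := by
    rw [← mul_assoc, ← exp_add, mul_sub, sub_eq_add_neg]
  rw [ha, hb]
  exact mul_lt_mul_of_pos_left hmono (exp_pos _)

/-- The part of an edge of length `w`, whose nearer endpoint is at distance `m`, that lies inside
the ball of radius `ρ`. -/
def ramp (m w ρ : ℝ) : ℝ := min (max (ρ - m) 0) w

lemma ramp_nonneg {m w : ℝ} (hw : 0 ≤ w) (ρ : ℝ) : 0 ≤ ramp m w ρ :=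
  le_min (le_max_right _ _) hw

lemma ramp_le (m w ρ : ℝ) : ramp m w ρ ≤ w := min_le_right _ _

lemma ramp_eq_zero {m w ρ : ℝ} (hw : 0 ≤ w) (hρ : ρ ≤ m) : ramp m w ρ = 0 := by
  simp [ramp, hρ, hw]

lemma continuous_ramp (m w : ℝ) : Continuous (ramp m w) := by
  unfold ramp; fun_prop

lemma hasDerivWithinAt_ramp (m w x : ℝ) :
    HasDerivWithinAt (ramp m w) (if m ≤ x ∧ x < m + w then 1 else 0) (Ici x) x := by
  by_cases hmx : m ≤ x
  · by_cases hxw : x < m + w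
    · rw [if_pos ⟨hmx, hxw⟩]
      refine ((hasDerivAt_id x).sub_const m).hasDerivWithinAt.congr_of_eventuallyEq ?_ ?_
      · filter_upwards [self_mem_nhdsWithin, mem_nhdsWithin_of_mem_nhds (Iio_mem_nhds hxw)]
          with z hxz hzw
        simp only [ramp, id]
        rw [max_eq_left (by linarith [mem_Ici.1 hxz]), min_eq_left (by linarith [mem_Iio.1 hzw])]
      · simp only [ramp, id]
        rw [max_eq_left (by linarith), min_eq_left (by linarith)]
    · rw [if_neg (fun h => hxw h.2)]
      refine (hasDerivWithinAt_const x _ w).congr_of_eventuallyEq ?_ ?_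
      · filter_upwards [self_mem_nhdsWithin] with z hxz
        exact min_eq_right (le_max_of_le_left (by linarith [mem_Ici.1 hxz]))
      · exact min_eq_right (le_max_of_le_left (by linarith))
  · rw [if_neg (fun h => hmx h.1)]
    refine (hasDerivAt_const x (min 0 w)).hasDerivWithinAt.congr_of_eventuallyEq ?_ ?_
    · filter_upwards [mem_nhdsWithin_of_mem_nhds (Iio_mem_nhds (not_le.1 hmx))] with z hz
      simp only [ramp]
      rw [max_eq_right (by linarith [mem_Iio.1 hz])]
    · simp only [ramp]
      rw [max_eq_right (by linarith)]

theorem exists_sum_le_mul_add_sum_ramp {α : Type*} (A : Finset α) {c m w : α → ℝ}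
    (hc : ∀ e ∈ A, 0 ≤ c e) (hw : ∀ e ∈ A, 0 ≤ w e) {a b k V₀ : ℝ} (hab : a < b)
    (hcap : ∑ e ∈ A, c e * w e ≤ (exp (k * (b - a)) - 1) * V₀) :
    ∃ ρ ∈ Ico a b, ∑ e ∈ A with m e ≤ ρ ∧ ρ < m e + w e, c e ≤
      k * (V₀ + ∑ e ∈ A, c e * ramp (m e) (w e) ρ) := by
  by_contra! h
  set vol : ℝ → ℝ := fun ρ => V₀ + ∑ e ∈ A, c e * ramp (m e) (w e) ρ
  have hderiv (x : ℝ) :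
      HasDerivWithinAt vol (∑ e ∈ A with m e ≤ x ∧ x < m e + w e, c e) (Ici x) x := by
    have := (HasDerivWithinAt.fun_sum (u := A) fun e _ =>
      (hasDerivWithinAt_ramp (m e) (w e) x).const_mul (c e)).const_add V₀
    simpa only [sum_filter, mul_ite, mul_one, mul_zero] using this
  have hcont : Continuous vol :=
    continuous_const.add (continuous_finsetSum _ fun e _ => (continuous_ramp _ _).const_mul _)
  have hgrowth := exp_mul_lt_of_hasDerivWithinAt_Ici hab hcont.continuousOn
    (fun x _ => hderiv x) h
  have hvol_a : V₀ ≤ vol a :=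
    le_add_of_nonneg_right (sum_nonneg fun e he => mul_nonneg (hc e he) (ramp_nonneg (hw e he) a))
  have hvol_b : vol b ≤ V₀ + ∑ e ∈ A, c e * w e :=
    add_le_add_right (sum_le_sum fun e he => mul_le_mul_of_nonneg_left (ramp_le _ _ _) (hc e he)) _
  have := mul_le_mul_of_nonneg_left hvol_a (exp_pos (k * (b - a))).le
  linarith

section Distance

variable {V : Type*} {G : SimpleGraph V} (l : Sym2 V → NNReal)

lemma walkLen_append {u v w : V} (p : G.Walk u v) (q : G.Walk v w) :
    walkLen l (p.append q) = walkLen l p + walkLen l q := by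
  simp [walkLen]

lemma walkLen_reverse {u v : V} (p : G.Walk u v) : walkLen l p.reverse = walkLen l p := by
  simp [walkLen, List.sum_reverse]

lemma wdist_le_walkLen {u v : V} (p : G.Walk u v) : wdist G l u v ≤ walkLen l p :=
  iInf_le _ _

lemma wdist_comm (u v : V) : wdist G l u v = wdist G l v u := by
  have h (a b : V) : wdist G l a b ≤ wdist G l b a :=
    le_iInf fun p => by simpa [walkLen_reverse] using wdist_le_walkLen l p.reverse
  exact le_antisymm (h u v) (h v u)

lemma wdist_triangle (u v w : V) : wdist G l u w ≤ wdist G l u v + wdist G l v w := by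
  simp only [wdist, ENNReal.iInf_add, ENNReal.add_iInf]
  exact le_iInf₂ fun q p => (wdist_le_walkLen l (p.append q)).trans_eq (walkLen_append l p q)

lemma wdist_le_add_of_adj {s x y : V} (h : G.Adj x y) :
    wdist G l s y ≤ wdist G l s x + l s(x, y) := by
  refine (wdist_triangle l s x y).trans (add_le_add le_rfl ?_)
  simpa [walkLen] using wdist_le_walkLen l (SimpleGraph.Walk.cons h SimpleGraph.Walk.nil)

/-- Truncating at `1` makes the distance real-valued without changing balls of radius `< 1`. -/
noncomputable def truncDist (G : SimpleGraph V) (s u : V) : ℝ := (min (wdist G l s u) 1).toReal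

lemma truncDist_le_iff {s u : V} {ρ : ℝ} (h₀ : 0 ≤ ρ) (h₁ : ρ < 1) :
    truncDist l G s u ≤ ρ ↔ wdist G l s u ≤ ENNReal.ofReal ρ := by
  rw [truncDist, ← ENNReal.le_ofReal_iff_toReal_le (by simp) h₀, min_le_iff,
    or_iff_left (not_le.2 (ENNReal.ofReal_lt_one.2 h₁))]

lemma truncDist_le_add_of_adj {s x y : V} (h : G.Adj x y) :
    truncDist l G s y ≤ truncDist l G s x + l s(x, y) := by
  have hmin : min (wdist G l s y) 1 ≤ min (wdist G l s x) 1 + l s(x, y) := by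
    rw [← min_add_add_right]
    exact min_le_min (wdist_le_add_of_adj l h) le_self_add
  simpa [truncDist, ENNReal.toReal_add] using
    ENNReal.toReal_mono (by simp [ENNReal.add_eq_top]) hmin

lemma wdist_lt_one_of_truncDist_le {s u v : V} {ρ : ℝ} (h₀ : 0 ≤ ρ) (h₁ : ρ < 1 / 2)
    (hu : truncDist l G s u ≤ ρ) (hv : truncDist l G s v ≤ ρ) : wdist G l u v < 1 := by
  rw [truncDist_le_iff l h₀ (by linarith)] at hu hv
  calc wdist G l u v ≤ wdist G l s u + wdist G l s v := by
        simpa [wdist_comm l u s] using wdist_triangle l u s v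
    _ ≤ ENNReal.ofReal (ρ + ρ) := by rw [ENNReal.ofReal_add h₀ h₀]; exact add_le_add hu hv
    _ < 1 := ENNReal.ofReal_lt_one.2 (by linarith)

lemma sup_le_inf_add_of_mem_edgeSet {δ : V → ℝ}
    (hδ : ∀ x y, G.Adj x y → δ y ≤ δ x + l s(x, y)) {e : Sym2 V} (he : e ∈ G.edgeSet) :
    (e.map δ).sup ≤ (e.map δ).inf + l e := by
  induction e with
  | _ x y =>
    rw [SimpleGraph.mem_edgeSet] at he
    have hyx := hδ y x he.symm
    rw [Sym2.eq_swap] at hyx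
    simp only [Sym2.map_mk, Sym2.inf_mk, Sym2.sup_mk]
    rcases le_total (δ x) (δ y) with h | h
    · rw [inf_eq_left.2 h, sup_eq_right.2 h]; exact hδ x y he
    · rw [inf_eq_right.2 h, sup_eq_left.2 h]; exact hyx

end Distance

structure IsCluster {V : Type*} (G : SimpleGraph V) (l : Sym2 V → NNReal) (E' : Finset (Sym2 V))
    (W R : Finset V) : Prop where
  subset : R ⊆ W
  wdist_lt_one : ∀ u ∈ R, ∀ v ∈ R, wdist G l u v < 1
  mem_of_adj : ∀ x ∈ R, ∀ y ∈ W, G.Adj x y → s(x, y) ∉ E' → y ∈ R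

lemma IsCluster.mem_of_reachable {V : Type*} [Fintype V] {G : SimpleGraph V}
    {l : Sym2 V → NNReal} {E' : Finset (Sym2 V)} {R : Finset V}
    (hR : IsCluster G l E' univ R) {u v : V} (huv : (G.deleteEdges E').Reachable u v)
    (hu : u ∈ R) : v ∈ R := by
  obtain ⟨p⟩ := huv
  induction p with
  | nil => exact hu
  | cons h _ ih =>
    rw [SimpleGraph.deleteEdges_adj] at h
    exact ih (hR.mem_of_adj _ hu _ (mem_univ _) h.1 h.2)

section Clusters

variable {V : Type*} [Fintype V] [DecidableEq V] {G : SimpleGraph V} [DecidableRel G.Adj]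
  (c l : Sym2 V → NNReal)

variable (G) in
def edgesIn (W : Finset V) : Finset (Sym2 V) := {e ∈ G.edgeFinset | ∀ v ∈ e, v ∈ W}

variable (G) in
noncomputable def cutEdges (W : Finset V) (δ : V → ℝ) (ρ : ℝ) : Finset (Sym2 V) :=
  {e ∈ edgesIn G W | (e.map δ).inf ≤ ρ ∧ ρ < (e.map δ).sup}

lemma edgesIn_univ : edgesIn G univ = G.edgeFinset :=
  filter_true_of_mem fun _ _ _ _ => mem_univ _

lemma edgesIn_mono {W W' : Finset V} (h : W ⊆ W') : edgesIn G W ⊆ edgesIn G W' :=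
  fun _ he => by
    simp only [edgesIn, mem_filter] at he ⊢
    exact ⟨he.1, fun v hv => h (he.2 v hv)⟩

lemma mk_mem_cutEdges {W : Finset V} {δ : V → ℝ} {ρ : ℝ} {x y : V} (hx : x ∈ W) (hy : y ∈ W)
    (hxy : G.Adj x y) (hδx : δ x ≤ ρ) (hδy : ρ < δ y) : s(x, y) ∈ cutEdges G W δ ρ := by
  simp only [cutEdges, edgesIn, mem_filter, SimpleGraph.mem_edgeFinset, SimpleGraph.mem_edgeSet,
    Sym2.forall_mem_pair, Sym2.map_mk, Sym2.inf_mk, Sym2.sup_mk]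
  exact ⟨⟨hxy, hx, hy⟩, inf_le_left.trans hδx, hδy.trans_le le_sup_right⟩

variable (G) in
lemma sum_ramp_add_sum_le (W : Finset V) (δ : V → ℝ) (ρ : ℝ) :
    ∑ e ∈ edgesIn G W, (c e : ℝ) * ramp (e.map δ).inf (l e) ρ
      + ∑ e ∈ edgesIn G {u ∈ W | ρ < δ u}, (c e : ℝ) * l e
      ≤ ∑ e ∈ edgesIn G W, (c e : ℝ) * l e := by
  have hsub : edgesIn G {u ∈ W | ρ < δ u} ⊆ edgesIn G W := edgesIn_mono (filter_subset _ _)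
  have hzero (e) (he : e ∈ edgesIn G {u ∈ W | ρ < δ u}) :
      (c e : ℝ) * ramp (e.map δ).inf (l e) ρ = 0 := by
    refine mul_eq_zero_of_right _ (ramp_eq_zero (l e).coe_nonneg ?_)
    simp only [edgesIn, mem_filter] at he
    induction e with
    | _ x y =>
      simp only [Sym2.forall_mem_pair] at he
      simpa using le_min he.2.1.2.le he.2.2.2.le
  rw [← sum_sdiff hsub, ← sum_sdiff hsub (f := fun e => (c e : ℝ) * l e), sum_eq_zero hzero,
    add_zero]
  gcongr with e
  exact ramp_le _ _ _

theorem exists_sum_cutEdges_add_le {δ : V → ℝ} (hδ : ∀ x y, G.Adj x y → δ y ≤ δ x + l s(x, y))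
    (W : Finset V) {a b k V₀ : ℝ} (hab : a < b) (hk : 0 ≤ k)
    (hcap : ∑ e ∈ edgesIn G W, (c e : ℝ) * l e ≤ (exp (k * (b - a)) - 1) * V₀) :
    ∃ ρ ∈ Ico a b, ∑ e ∈ cutEdges G W δ ρ, (c e : ℝ)
        + k * ∑ e ∈ edgesIn G {u ∈ W | ρ < δ u}, (c e : ℝ) * l e
      ≤ k * (V₀ + ∑ e ∈ edgesIn G W, (c e : ℝ) * l e) := by
  obtain ⟨ρ, hρ, hrate⟩ := exists_sum_le_mul_add_sum_ramp (edgesIn G W)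
    (m := fun e => (e.map δ).inf) (fun e _ => (c e).coe_nonneg) (fun e _ => (l e).coe_nonneg)
    hab hcap
  refine ⟨ρ, hρ, ?_⟩
  have hcut : ∑ e ∈ cutEdges G W δ ρ, (c e : ℝ)
      ≤ ∑ e ∈ edgesIn G W with (e.map δ).inf ≤ ρ ∧ ρ < (e.map δ).inf + l e, (c e : ℝ) := by
    refine sum_le_sum_of_subset_of_nonneg (fun e he => ?_) fun e _ _ => (c e).coe_nonneg
    simp only [cutEdges, mem_filter] at he ⊢
    have hedge : e ∈ G.edgeSet := by simpa [edgesIn] using (mem_filter.1 he.1).1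
    exact ⟨he.1, he.2.1, he.2.2.trans_le (sup_le_inf_add_of_mem_edgeSet l hδ hedge)⟩
  have := mul_le_mul_of_nonneg_left (sum_ramp_add_sum_le G c l W δ ρ) hk
  linarith

lemma isCluster_ball {s : V} {W : Finset V} {ρ : ℝ} (h₀ : 0 ≤ ρ) (h₁ : ρ < 1 / 2)
    {E' : Finset (Sym2 V)} (hcut : cutEdges G W (truncDist l G s) ρ ⊆ E') :
    IsCluster G l E' W {u ∈ W | truncDist l G s u ≤ ρ} where
  subset := filter_subset _ _
  wdist_lt_one _ hu _ hv :=
    wdist_lt_one_of_truncDist_le l h₀ h₁ (mem_filter.1 hu).2 (mem_filter.1 hv).2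
  mem_of_adj x hx y hy hxy hxyE := by
    by_contra hyR
    exact hxyE <| hcut <| mk_mem_cutEdges (mem_filter.1 hx).1 hy hxy (mem_filter.1 hx).2 <|
      not_le.1 fun h => hyR (mem_filter.2 ⟨hy, h⟩)

lemma IsCluster.of_filter_lt {δ : V → ℝ} {ρ : ℝ} {W R : Finset V} {E E' : Finset (Sym2 V)}
    (hR : IsCluster G l E {u ∈ W | ρ < δ u} R) (hE : E ⊆ E') (hcut : cutEdges G W δ ρ ⊆ E') :
    IsCluster G l E' W R where
  subset := hR.subset.trans (filter_subset _ _)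
  wdist_lt_one := hR.wdist_lt_one
  mem_of_adj x hx y hy hxy hxyE := by
    obtain ⟨hxW, hδx⟩ := mem_filter.1 (hR.subset hx)
    by_cases hδy : ρ < δ y
    · exact hR.mem_of_adj x hx y (mem_filter.2 ⟨hy, hδy⟩) hxy fun h => hxyE (hE h)
    · refine absurd (hcut ?_) hxyE
      rw [Sym2.eq_swap]
      exact mk_mem_cutEdges hy hxW hxy.symm (not_lt.1 hδy) hδx

theorem exists_clusters {k V₀ : ℝ} (hk : 0 ≤ k)
    (hcap : ∑ e ∈ G.edgeFinset, (c e : ℝ) * l e ≤ (exp (k / 4) - 1) * V₀) (S W : Finset V) :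
    ∃ E' ⊆ G.edgeFinset, ∃ Rs : Finset (Finset V),
      ∑ e ∈ E', (c e : ℝ) ≤ k * (#S * V₀ + ∑ e ∈ edgesIn G W, (c e : ℝ) * l e) ∧
      (∀ u ∈ W, (∃ s ∈ S, wdist G l s u ≤ 1 / 4) → ∃ R ∈ Rs, u ∈ R) ∧
      ∀ R ∈ Rs, IsCluster G l E' W R := by
  induction S using Finset.induction_on generalizing W with
  | empty =>
    refine ⟨∅, empty_subset _, ∅, ?_, by simp, by simp⟩
    simpa using mul_nonneg hk (sum_nonneg fun e _ => by positivity)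
  | insert s S hs ih =>
    have hcapW : ∑ e ∈ edgesIn G W, (c e : ℝ) * l e ≤ (exp (k * (1 / 2 - 1 / 4)) - 1) * V₀ := by
      rw [show k * (1 / 2 - 1 / 4) = k / 4 by ring]
      exact (sum_le_sum_of_subset_of_nonneg (filter_subset _ _)
        fun e _ _ => mul_nonneg (c e).coe_nonneg (l e).coe_nonneg).trans hcap
    obtain ⟨ρ, hρ, hcost⟩ := exists_sum_cutEdges_add_le c l
      (fun _ _ => truncDist_le_add_of_adj l (s := s)) W (by norm_num) hk hcapW
    set C := cutEdges G W (truncDist l G s) ρ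
    obtain ⟨E, hE, Rs, hcostE, hcover, hclusters⟩ := ih {u ∈ W | ρ < truncDist l G s u}
    refine ⟨C ∪ E, union_subset ((filter_subset _ _).trans (filter_subset _ _)) hE,
      insert {u ∈ W | truncDist l G s u ≤ ρ} Rs, ?_, ?_, ?_⟩
    · have hunion : ∑ e ∈ C ∪ E, (c e : ℝ) ≤ ∑ e ∈ C, (c e : ℝ) + ∑ e ∈ E, (c e : ℝ) := by
        rw [← sum_union_inter]
        exact le_add_of_nonneg_right (sum_nonneg fun e _ => (c e).coe_nonneg)
      rw [card_insert_of_notMem hs]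
      push_cast
      linarith
    · rintro u hu ⟨s', hs', hs'u⟩
      by_cases huR : truncDist l G s u ≤ ρ
      · exact ⟨_, mem_insert_self _ _, mem_filter.2 ⟨hu, huR⟩⟩
      obtain rfl | hs' := mem_insert.1 hs'
      · have hquarter : truncDist l G s' u ≤ 1 / 4 :=
          (truncDist_le_iff l (by norm_num) (by norm_num)).2 <| by
            rwa [ENNReal.ofReal_div_of_pos four_pos, ENNReal.ofReal_one, ENNReal.ofReal_ofNat]
        exact absurd (hquarter.trans hρ.1) huR
      obtain ⟨R, hR, huR'⟩ := hcover u (mem_filter.2 ⟨hu, not_le.1 huR⟩) ⟨s', hs', hs'u⟩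
      exact ⟨R, mem_insert_of_mem hR, huR'⟩
    · intro R hR
      obtain rfl | hR := mem_insert.1 hR
      · exact isCluster_ball l (by linarith [hρ.1]) hρ.2 subset_union_left
      · exact (hclusters R hR).of_filter_lt l subset_union_right subset_union_left

end Clusters

/-- Covering decomposition lemma. If `S ⊆ V` with `|S| ≤ r` satisfies
`d(u,S) ≤ 1/4` for all `u`, then there is a set `E'` of edges of capacity at most
`8·ln(r+1)·F` (where `F = Σ_e c(e)·l(e)`) whose removal leaves only components of
`d_G`-diameter strictly less than `1`. -/
theorem covering_decomposition {V : Type*} [Fintype V] [DecidableEq V]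
    (G : SimpleGraph V) [DecidableRel G.Adj]
    (c l : Sym2 V → NNReal) (r : ℕ) (S : Finset V)
    (hScard : S.card ≤ r)
    (hnear : ∀ u : V, ∃ s ∈ S, wdist G l s u ≤ 1/4) :
    ∃ E' ⊆ G.edgeFinset,
      (∑ e ∈ E', (c e : ℝ)) ≤ 8 * Real.log (r + 1) * ∑ e ∈ G.edgeFinset, ((c e : ℝ) * l e) ∧
      ∀ u v : V, (G.deleteEdges ↑E').Reachable u v → wdist G l u v < 1 := by
  set F := ∑ e ∈ G.edgeFinset, (c e : ℝ) * l e
  have hrF : (r : ℝ) * (F / r) = F := by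
    obtain rfl | hr := Nat.eq_zero_or_pos r
    · have : IsEmpty V := ⟨fun u => by obtain ⟨s, hs, -⟩ := hnear u; simp_all⟩
      simp [F, sum_of_isEmpty]
    · exact mul_div_cancel₀ _ (by positivity)
  have hk : 0 ≤ 4 * log (r + 1) := mul_nonneg (by norm_num) (log_nonneg (by simp))
  have hcap : F ≤ (exp (4 * log (r + 1) / 4) - 1) * (F / r) := by
    rw [mul_div_cancel_left₀ _ four_ne_zero, exp_log (by positivity), add_sub_cancel_right, hrF]
  obtain ⟨E', hE', Rs, hcost, hcover, hRs⟩ := exists_clusters c l hk hcap S univ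
  refine ⟨E', hE', ?_, fun u v huv => ?_⟩
  · have hF : 0 ≤ F := sum_nonneg fun e _ => by positivity
    have hSF : (#S : ℝ) * (F / r) ≤ F := calc
      (#S : ℝ) * (F / r) ≤ r * (F / r) := by gcongr
      _ = F := hrF
    rw [edgesIn_univ] at hcost
    calc ∑ e ∈ E', (c e : ℝ) ≤ 4 * log (r + 1) * (#S * (F / r) + F) := hcost
      _ ≤ 4 * log (r + 1) * (F + F) := by gcongr
      _ = 8 * log (r + 1) * F := by ring
  · obtain ⟨s, hs, hsu⟩ := hnear u
    obtain ⟨R, hR, huR⟩ := hcover u (mem_univ u) ⟨s, hs, hsu⟩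
    exact (hRs R hR).wdist_lt_one u huR v ((hRs R hR).mem_of_reachable huv huR)
end

section
/- Let R₁, R₂ be cores with rank(R₁) > rank(R₂), R₁ an ancestor of R₂, and assume no core of rank smaller than rank(R₂) has its center-bag on the tree path between the center-bags of R₁ and R₂. Then within G_T[R₂], every vertex of the shadow-domain of R₁ belongs to the shadow-domain of R₂. -/
/-- Let `R₁, R₂` be cores with `rank R₁ > rank R₂` and `R₁` an ancestor of
`R₂`, such that no core of rank smaller than `rank R₂` has its center-bag on the tree path
between the center-bags of `R₁` and `R₂`. Then within the subgraph rooted at the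
center-bag of `R₂`, every vertex of the shadow-domain of `R₁` belongs to the
shadow-domain of `R₂`. Here `subV i` is the vertex set of the subtree rooted at bag `i`,
and the shadow-domain of `R` is `subV (cbag R)` minus all vertices in ancestor cores of
rank `< rank R`; ancestors of a fixed bag are totally ordered (tree property). -/
theorem shadow_domain_inclusion {V ι κ : Type*}
    (anc : ι → ι → Prop)                 -- `anc i j`: bag `i` is an ancestor of bag `j`
    (subV : ι → Set V)
    (coreVerts : κ → Set V) (cbag : κ → ι) (rank : κ → ℕ)
    (SD : κ → Set V)
    (hSD : ∀ R : κ, SD R = subV (cbag R) \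
      ⋃ R' ∈ {R' : κ | anc (cbag R') (cbag R) ∧ rank R' < rank R}, coreVerts R')
    (R₁ R₂ : κ)
    (hrank : rank R₂ < rank R₁)
    (hanc : anc (cbag R₁) (cbag R₂))
    (hpath : ∀ R₃ : κ, rank R₃ < rank R₂ →
      ¬ (anc (cbag R₁) (cbag R₃) ∧ anc (cbag R₃) (cbag R₂)))
    (htotal : ∀ j : ι, anc j (cbag R₂) → anc (cbag R₁) j ∨ anc j (cbag R₁)) :
    ∀ v ∈ subV (cbag R₂), v ∈ SD R₁ → v ∈ SD R₂ := by
  intro v hv hv1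
  rw [hSD] at hv1 ⊢
  refine ⟨hv, ?_⟩
  intro hmem
  simp only [Set.mem_iUnion, Set.mem_setOf_eq, exists_prop] at hmem
  obtain ⟨R', ⟨hanc', hr'⟩, hvR'⟩ := hmem
  rcases htotal (cbag R') hanc' with h | h
  · exact hpath R' hr' ⟨h, hanc'⟩
  · exact hv1.2 (Set.mem_iUnion.2 ⟨R', by
      simp only [Set.mem_iUnion, Set.mem_setOf_eq, exists_prop]
      exact ⟨⟨h, hr'.trans hrank⟩, hvR'⟩⟩)
end
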